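/- arXiv:1409.7955 — 3 statements merged into one kernel-verified Lean document; each statement's English description precedes it below -/
import Mathlib

section
/- Let Γ be a finitely generated torsion-free nilpotent group. Then the subgroup counting function is multiplicative: for all m, n ∈ ℕ with gcd(m, n) = 1, one has a_{mn}(Γ) = a_m(Γ)·a_n(Γ). -/
/-- The number of subgroups of index `n` in a group `G`. -/
noncomputable def subgroupCount (G : Type*) [Group G] (n : ℕ) : ℕ :=
  Nat.card {H : Subgroup G // H.index = n}

/-- A monoid is torsion-free if no nontrivial elements have finite order
(the definition `Monoid.IsTorsionFree` of the older Mathlib, since removed). -/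
def Monoid.IsTorsionFree (G : Type*) [Monoid G] : Prop :=
  ∀ g : G, g ≠ 1 → ¬IsOfFinOrder g

/-!
Let `H` have index `mn` with `m, n` coprime. Passing to the quotient by the normal core of `H`
we may assume the nilpotent group is finite, so that its Sylow subgroups are normal.
Let `T` be the largest normal subgroup of order prime to `m`; it contains the Sylow `p`-subgroups
for `p ∤ m`, so its index is divisible only by primes dividing `m`. Then `H ⊔ T` is the unique
subgroup of index `m` above `H`: every subgroup of index `m` contains `T`, and `[H ⊔ T : H]`
divides `|T|`. Hence `H` determines the pair of subgroups of index `m` and `n` above it, and it is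
their intersection, so `(K, L) ↦ K ⊓ L` is a bijection.
-/

namespace Subgroup

variable {G : Type*} [Group G]

theorem relIndex_sup_eq_relIndex_of_normal {H K : Subgroup G} [K.Normal]
    (hKH : K.relIndex H ≠ 0) : H.relIndex (H ⊔ K) = H.relIndex K := by
  have key := (relIndex_mul_relIndex (H ⊓ K) H (H ⊔ K) inf_le_left le_sup_left).trans
    (relIndex_mul_relIndex (H ⊓ K) K (H ⊔ K) inf_le_right le_sup_right).symm
  rw [inf_relIndex_left, inf_relIndex_right, relIndex_sup_right, mul_comm (H.relIndex K)] at key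
  exact mul_left_cancel₀ hKH key

theorem le_of_coprime_card_index {H N : Subgroup G} [N.Normal] (hNH : N.relIndex H ≠ 0)
    (h : (Nat.card N).Coprime H.index) : N ≤ H :=
  relIndex_eq_one.mp <| Nat.eq_one_of_dvd_coprimes h (relIndex_dvd_card H N)
    (relIndex_sup_eq_relIndex_of_normal hNH ▸ relIndex_dvd_index_of_le le_sup_left)

theorem card_sup_dvd_of_normal (H N : Subgroup G) [N.Normal] :
    Nat.card ↥(H ⊔ N) ∣ Nat.card H * Nat.card N := by
  rw [← relIndex_bot_left (H ⊔ N), ← relIndex_mul_relIndex ⊥ N _ bot_le le_sup_right,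
    relIndex_sup_right, relIndex_bot_left, mul_comm]
  exact mul_dvd_mul_right (relIndex_dvd_card N H) _

theorem index_inf_of_coprime {H K : Subgroup G} (h : H.index.Coprime K.index) :
    (H ⊓ K).index = H.index * K.index := by
  rcases eq_or_ne (H ⊓ K).index 0 with h0 | h0
  · rw [h0, eq_comm, mul_eq_zero]
    by_contra! hHK
    exact index_inf_ne_zero hHK.1 hHK.2 h0
  · exact le_antisymm index_inf_le <| Nat.le_of_dvd (Nat.pos_of_ne_zero h0) <|
      h.mul_dvd_of_dvd_of_dvd (index_dvd_of_le inf_le_left) (index_dvd_of_le inf_le_right)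

theorem eq_of_le_of_index_eq {H K : Subgroup G} (hle : H ≤ K) (h : H.index = K.index)
    (h0 : H.index ≠ 0) : H = K := by
  have hrel := relIndex_mul_index hle
  rw [h, mul_eq_right₀ (h ▸ h0), relIndex_eq_one] at hrel
  exact le_antisymm hle hrel

/-- `O_{m'}(G)` in the usual notation; in a finite group it is the largest normal subgroup of
order prime to `m`. -/
def coprimeRadical (G : Type*) [Group G] (m : ℕ) : Subgroup G :=
  sSup {N | N.Normal ∧ (Nat.card N).Coprime m}

theorem le_coprimeRadical {m : ℕ} {N : Subgroup G} [hN : N.Normal] (h : (Nat.card N).Coprime m) :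
    N ≤ coprimeRadical G m :=
  le_sSup ⟨hN, h⟩

section Finite

variable [Finite G] {m : ℕ}

theorem relIndex_ne_zero_of_finite (H K : Subgroup G) : H.relIndex K ≠ 0 :=
  mt H.index_eq_zero_of_relIndex_eq_zero index_ne_zero_of_finite

theorem coprimeRadical_mem (m : ℕ) :
    coprimeRadical G m ∈ {N : Subgroup G | N.Normal ∧ (Nat.card N).Coprime m} := by
  refine SupClosed.sSup_mem_of_nonempty ?_ (Set.toFinite _) ⟨⊥, normal_bot, by simp⟩
    subset_rfl
  rintro A ⟨hA, hAm⟩ B ⟨hB, hBm⟩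
  exact ⟨sup_normal A B, (hAm.mul_left hBm).coprime_dvd_left (card_sup_dvd_of_normal A B)⟩

instance coprimeRadical_normal : (coprimeRadical G m).Normal :=
  (coprimeRadical_mem m).1

theorem card_coprimeRadical_coprime : (Nat.card (coprimeRadical G m)).Coprime m :=
  (coprimeRadical_mem m).2

theorem coprimeRadical_le {K : Subgroup G} (hK : K.index ∣ m) : coprimeRadical G m ≤ K :=
  le_of_coprime_card_index (relIndex_ne_zero_of_finite _ _)
    (card_coprimeRadical_coprime.coprime_dvd_right hK)

theorem index_coprimeRadical_coprime [Group.IsNilpotent G] {n : ℕ} (hmn : m.Coprime n) :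
    (coprimeRadical G m).index.Coprime n := by
  refine Nat.coprime_of_dvd fun q hq hqT hqn => ?_
  have : Fact q.Prime := ⟨hq⟩
  obtain ⟨P⟩ : Nonempty (Sylow q G) := inferInstance
  have hqm : ¬q ∣ m := fun hqm => Nat.not_coprime_of_dvd_of_dvd hq.one_lt hqm hqn hmn
  have hPm : (Nat.card P).Coprime m := by
    obtain ⟨k, hk⟩ := P.2.exists_card_eq
    exact hk ▸ (hq.coprime_iff_not_dvd.mpr hqm).pow_left k
  exact P.not_dvd_index (hqT.trans (index_dvd_of_le (le_coprimeRadical hPm)))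

theorem existsUnique_le_index_eq_of_finite [Group.IsNilpotent G] {n : ℕ} (hmn : m.Coprime n)
    {H : Subgroup G} (hH : H.index = m * n) : ∃! K : Subgroup G, H ≤ K ∧ K.index = m := by
  set T := coprimeRadical G m
  have index_dvd : (H ⊔ T).index ∣ m :=
    ((index_coprimeRadical_coprime hmn).coprime_dvd_left (index_dvd_of_le le_sup_right))
      |>.dvd_of_dvd_mul_right (hH ▸ index_dvd_of_le le_sup_left)
  have hrel : H.relIndex (H ⊔ T) ∣ Nat.card T :=
    relIndex_sup_eq_relIndex_of_normal (relIndex_ne_zero_of_finite T H) ▸ relIndex_dvd_card H T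
  have dvd_index : m ∣ (H ⊔ T).index :=
    (card_coprimeRadical_coprime.coprime_dvd_left hrel).symm.dvd_of_dvd_mul_left
      (relIndex_mul_index (le_sup_left : H ≤ H ⊔ T) ▸ hH ▸ dvd_mul_right m n)
  have hindex : (H ⊔ T).index = m := Nat.dvd_antisymm index_dvd dvd_index
  refine ⟨H ⊔ T, ⟨le_sup_left, hindex⟩, fun K ⟨hHK, hK⟩ => ?_⟩
  exact (eq_of_le_of_index_eq (sup_le hHK (coprimeRadical_le hK.dvd)) (hindex.trans hK.symm)
    (hindex ▸ index_ne_zero_of_finite)).symm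

end Finite

theorem existsUnique_le_index_eq_of_map {G' : Type*} [Group G'] {f : G →* G'}
    (hf : Function.Surjective f) {H : Subgroup G} (hH : f.ker ≤ H) {m : ℕ}
    (h : ∃! K' : Subgroup G', H.map f ≤ K' ∧ K'.index = m) :
    ∃! K : Subgroup G, H ≤ K ∧ K.index = m := by
  obtain ⟨K', ⟨hHK', hK'⟩, huniq⟩ := h
  refine ⟨K'.comap f,
    ⟨map_le_iff_le_comap.mp hHK', (index_comap_of_surjective K' hf).trans hK'⟩,
    fun K ⟨hHK, hK⟩ => ?_⟩
  have hker : f.ker ≤ K := hH.trans hHK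
  rw [← huniq (K.map f) ⟨map_mono hHK, (index_map_eq K hf hker).trans hK⟩, comap_map_eq,
    sup_of_le_left hker]

theorem existsUnique_le_index_eq_of_coprime [Group.IsNilpotent G] {m n : ℕ} (hmn : m.Coprime n)
    {H : Subgroup G} [H.FiniteIndex] (hH : H.index = m * n) :
    ∃! K : Subgroup G, H ≤ K ∧ K.index = m := by
  have hsurj := QuotientGroup.mk'_surjective H.normalCore
  have hker : (QuotientGroup.mk' H.normalCore).ker ≤ H :=
    (QuotientGroup.ker_mk' _).le.trans (normalCore_le H)
  exact existsUnique_le_index_eq_of_map hsurj hker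
    (existsUnique_le_index_eq_of_finite hmn ((index_map_eq H hsurj hker).trans hH))

def infOfCoprimeIndex {m n : ℕ} (hmn : m.Coprime n)
    (KL : {K : Subgroup G // K.index = m} × {L : Subgroup G // L.index = n}) :
    {H : Subgroup G // H.index = m * n} :=
  ⟨KL.1 ⊓ KL.2, by
    obtain ⟨⟨K, rfl⟩, ⟨L, rfl⟩⟩ := KL
    exact index_inf_of_coprime hmn⟩

theorem infOfCoprimeIndex_bijective [Group.IsNilpotent G] {m n : ℕ} (hmn : m.Coprime n)
    (h0 : m * n ≠ 0) : Function.Bijective (infOfCoprimeIndex (G := G) hmn) := by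
  have hnm : m * n = n * m := mul_comm m n
  refine ⟨fun ⟨⟨K, hK⟩, ⟨L, hL⟩⟩ ⟨⟨K', hK'⟩, ⟨L', hL'⟩⟩ hEq => ?_,
    fun ⟨H, hH⟩ => ?_⟩
  · have hKL : K ⊓ L = K' ⊓ L' := congrArg Subtype.val hEq
    have hindex : (K ⊓ L).index = m * n :=
      (infOfCoprimeIndex hmn ⟨⟨K, hK⟩, ⟨L, hL⟩⟩).2
    have : (K ⊓ L).FiniteIndex := ⟨hindex ▸ h0⟩
    have hK_unique := existsUnique_le_index_eq_of_coprime hmn hindex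
    have hL_unique := existsUnique_le_index_eq_of_coprime hmn.symm (hindex.trans hnm)
    exact Prod.ext
      (Subtype.ext (hK_unique.unique ⟨inf_le_left, hK⟩ ⟨hKL ▸ inf_le_left, hK'⟩))
      (Subtype.ext (hL_unique.unique ⟨inf_le_right, hL⟩ ⟨hKL ▸ inf_le_right, hL'⟩))
  · have : H.FiniteIndex := ⟨hH ▸ h0⟩
    obtain ⟨K, ⟨hHK, hK⟩, -⟩ := existsUnique_le_index_eq_of_coprime hmn hH
    obtain ⟨L, ⟨hHL, hL⟩, -⟩ := existsUnique_le_index_eq_of_coprime hmn.symm (hH.trans hnm)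
    let KL : {K : Subgroup G // K.index = m} × {L : Subgroup G // L.index = n} :=
      ⟨⟨K, hK⟩, ⟨L, hL⟩⟩
    refine ⟨KL, Subtype.ext (eq_of_le_of_index_eq (le_inf hHK hHL) ?_ (hH ▸ h0)).symm⟩
    exact hH.trans (infOfCoprimeIndex hmn KL).2.symm

end Subgroup

theorem subgroupCount_one (G : Type*) [Group G] : subgroupCount G 1 = 1 :=
  Nat.card_eq_one_iff_unique.mpr
    ⟨⟨fun H K => Subtype.ext <|
      (Subgroup.index_eq_one.mp H.2).trans (Subgroup.index_eq_one.mp K.2).symm⟩,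
      ⟨⟨⊤, Subgroup.index_top⟩⟩⟩

theorem subgroupCount_multiplicative_of_T_group_general
    (Γ : Type*) [Group Γ] [Group.IsNilpotent Γ]
    (m n : ℕ) (h : Nat.gcd m n = 1) :
    subgroupCount Γ (m * n) = subgroupCount Γ m * subgroupCount Γ n := by
  rcases eq_or_ne (m * n) 0 with h0 | h0
  · obtain rfl | rfl : m = 1 ∨ n = 1 := by
      rcases mul_eq_zero.mp h0 with rfl | rfl <;> simp_all
    · rw [one_mul, subgroupCount_one, one_mul]
    · rw [mul_one, subgroupCount_one, mul_one]
  · rw [subgroupCount, subgroupCount, subgroupCount, ← Nat.card_prod]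
    exact (Nat.card_eq_of_bijective _ (Subgroup.infOfCoprimeIndex_bijective h h0)).symm

/-- **Multiplicativity of the subgroup counting function of a 𝒯-group.**
If `Γ` is a finitely generated torsion-free nilpotent group and `m, n` are coprime natural
numbers, then `a_{mn}(Γ) = a_m(Γ) · a_n(Γ)`. -/
theorem subgroupCount_multiplicative_of_T_group
    (Γ : Type*) [Group Γ] [Group.FG Γ] [Group.IsNilpotent Γ]
    (hTF : Monoid.IsTorsionFree Γ)
    (m n : ℕ) (h : Nat.gcd m n = 1) :
    subgroupCount Γ (m * n) = subgroupCount Γ m * subgroupCount Γ n :=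
  subgroupCount_multiplicative_of_T_group_general Γ m n h
end

section
/- For every prime p, the local subgroup zeta function of the integral Heisenberg group H(ℤ) satisfies, as an identity of formal power series in ℚ[[Y]]: (∑_{i≥0} a_{p^i}(H(ℤ))·Y^i)·(1−Y)(1−pY)(1−p²Y²)(1−p³Y²) = 1 − p³Y³. Equivalently, ζ_{H(ℤ)}(s) = ζ(s)ζ(s−1)ζ(2s−2)ζ(2s−3)ζ(3s−3)^{−1} factor by factor at each prime. -/
/-!
Every subgroup `H` of finite index in `H(ℤ)` has a unique basis `(a, s, u)`, `(0, d, v)`,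
`(0, 0, m)` with `a, d, m > 0`, `m ∣ a d`, `0 ≤ s < d` and `0 ≤ u, v < m`: here `aℤ`, `dℤ`, `mℤ`
are the groups of `x`-coordinates of `H`, of `y`-coordinates of `H ∩ {x = 0}` and of
`z`-coordinates of `H ∩ Z(H(ℤ))`, and `m ∣ a d` because `H` contains the commutator `(0, 0, a d)`
of its first two basis vectors. The box `[0, a) × [0, d) × [0, m)` is a transversal, so the index
is `a d m` and `a_N = ∑_{a d m = N, m ∣ a d} d m²`. For `N = p ^ n` put
`(a, d, m) = (p^α, p^δ, p^β)`; summing the geometric series in `δ` gives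
`(p - 1) ∑ a_{p^n} Y^n = p / ((1 - pY)(1 - p³Y²)) - 1 / ((1 - Y)(1 - p²Y²))`.
-/

/-- The Heisenberg group over a commutative ring `R`: the group of upper unitriangular
`3 × 3` matrices `![![1, x, z], ![0, 1, y], ![0, 0, 1]]` with entries in `R`,
encoded by the entry triple `(x, y, z)` with the matrix multiplication law. -/
@[ext]
structure Heisenberg (R : Type*) [CommRing R] where
  x : R
  y : R
  z : R

namespace Heisenberg

variable {R : Type*} [CommRing R]

instance : Mul (Heisenberg R) :=
  ⟨fun a b => ⟨a.x + b.x, a.y + b.y, a.z + b.z + a.x * b.y⟩⟩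

instance : One (Heisenberg R) := ⟨⟨0, 0, 0⟩⟩

instance : Inv (Heisenberg R) :=
  ⟨fun a => ⟨-a.x, -a.y, a.x * a.y - a.z⟩⟩

lemma mul_def (a b : Heisenberg R) :
    a * b = ⟨a.x + b.x, a.y + b.y, a.z + b.z + a.x * b.y⟩ := rfl

lemma one_def : (1 : Heisenberg R) = ⟨0, 0, 0⟩ := rfl

lemma inv_def (a : Heisenberg R) : a⁻¹ = ⟨-a.x, -a.y, a.x * a.y - a.z⟩ := rfl

instance : Group (Heisenberg R) where
  mul_assoc a b c := by
    simp only [mul_def, mk.injEq]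
    refine ⟨by ring, by ring, by ring⟩
  one_mul a := by ext <;> simp [mul_def, one_def]
  mul_one a := by ext <;> simp [mul_def, one_def]
  inv_mul_cancel a := by
    simp only [mul_def, inv_def, one_def, mk.injEq]
    refine ⟨by ring, by ring, by ring⟩

end Heisenberg

theorem Int.eq_of_dvd_sub_of_mem_Ico {n a b : ℤ} (h : n ∣ b - a) (ha : a ∈ Set.Ico 0 n)
    (hb : b ∈ Set.Ico 0 n) : a = b := by
  have := Int.eq_zero_of_abs_lt_dvd h
    (abs_lt.mpr ⟨by linarith [ha.2, hb.1], by linarith [ha.1, hb.2]⟩)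
  linarith

theorem Int.zmultiples_natCast_injective :
    Function.Injective fun n : ℕ => AddSubgroup.zmultiples (n : ℤ) := by
  intro n n' h
  have hdvd : ∀ {k k' : ℕ}, AddSubgroup.zmultiples (k : ℤ) = AddSubgroup.zmultiples (k' : ℤ) →
      k' ∣ k := fun h =>
    Int.natCast_dvd_natCast.mp (Int.mem_zmultiples_iff.mp (h ▸ AddSubgroup.mem_zmultiples _))
  exact Nat.dvd_antisymm (hdvd h.symm) (hdvd h)

theorem Int.exists_pos_eq_zmultiples (S : AddSubgroup ℤ) {t : ℤ} (ht : t ∈ S) (ht0 : t ≠ 0) :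
    ∃ n : ℕ, 0 < n ∧ S = AddSubgroup.zmultiples (n : ℤ) := by
  obtain ⟨b, rfl⟩ := Int.subgroup_cyclic S
  refine ⟨b.natAbs, Int.natAbs_pos.mpr ?_, by
    rw [Int.zmultiples_natAbs, AddSubgroup.zmultiples_eq_closure]⟩
  rintro rfl
  rw [AddSubgroup.closure_singleton_zero, AddSubgroup.mem_bot] at ht
  exact ht0 ht

namespace PowerSeries

open Finset

variable {R : Type*} [CommRing R]

def geomSeries (k : ℕ) (q : R) : R⟦X⟧ := mk fun n => if k ∣ n then q ^ (n / k) else 0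

lemma geomSeries_mul_one_sub {k : ℕ} (hk : 0 < k) (q : R) :
    geomSeries k q * (1 - C q * X ^ k) = 1 := by
  ext n
  rw [mul_sub, mul_one, map_sub, mul_left_comm, coeff_C_mul, coeff_mul_X_pow']
  simp only [geomSeries, coeff_mk, coeff_one]
  rcases Nat.lt_or_ge n k with hn | hn
  · rcases Nat.eq_zero_or_pos n with rfl | hn0
    · simp [hk.ne']
    · simp [Nat.not_dvd_of_pos_of_lt hn0 hn, hn.not_ge, hn0.ne']
  · obtain ⟨n, rfl⟩ := Nat.exists_eq_add_of_le hn
    simp only [le_add_iff_nonneg_right, zero_le, Nat.add_sub_cancel_left,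
      Nat.dvd_add_self_left, Nat.add_div_left _ hk, (Nat.add_pos_left hk n).ne', ↓reduceIte]
    split_ifs <;> simp [pow_succ']

lemma coeff_geomSeries_one_mul_geomSeries_two (r q : R) (n : ℕ) :
    coeff n (geomSeries 1 r * geomSeries 2 q) =
      ∑ β ∈ range (n / 2 + 1), r ^ (n - 2 * β) * q ^ β := by
  rw [coeff_mul]
  simp only [geomSeries, coeff_mk, one_dvd, if_true, Nat.div_one, mul_ite, mul_zero]
  rw [← sum_filter]
  symm
  refine sum_nbij' (fun β => (n - 2 * β, 2 * β)) (fun x => x.2 / 2) ?_ ?_ ?_ ?_ ?_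
  · intro β hβ
    simp only [mem_range] at hβ
    simp only [mem_filter, HasAntidiagonal.mem_antidiagonal]
    exact ⟨by omega, dvd_mul_right 2 β⟩
  · rintro ⟨i, j⟩ hij
    simp only [mem_filter, HasAntidiagonal.mem_antidiagonal] at hij
    simp only [mem_range]
    omega
  · intro β _
    simp
  · rintro ⟨i, j⟩ hij
    simp only [mem_filter, HasAntidiagonal.mem_antidiagonal] at hij
    obtain ⟨hij, c, rfl⟩ := hij
    simp only [Prod.mk.injEq]
    omega
  · intro β _
    simp

lemma geomSeries_one_mul_geomSeries_two_mul (r q : R) :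
    geomSeries 1 r * geomSeries 2 q * ((1 - C r * X) * (1 - C q * X ^ 2)) = 1 := by
  have h₁ := geomSeries_mul_one_sub one_pos r
  rw [pow_one] at h₁
  rw [mul_mul_mul_comm, h₁, geomSeries_mul_one_sub two_pos, one_mul]

end PowerSeries

namespace Heisenberg

variable {R : Type*} [CommRing R]

@[simp] lemma mul_x (a b : Heisenberg R) : (a * b).x = a.x + b.x := rfl
@[simp] lemma mul_y (a b : Heisenberg R) : (a * b).y = a.y + b.y := rfl
@[simp] lemma mul_z (a b : Heisenberg R) : (a * b).z = a.z + b.z + a.x * b.y := rfl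
@[simp] lemma one_x : (1 : Heisenberg R).x = 0 := rfl
@[simp] lemma one_y : (1 : Heisenberg R).y = 0 := rfl
@[simp] lemma one_z : (1 : Heisenberg R).z = 0 := rfl
@[simp] lemma inv_x (a : Heisenberg R) : a⁻¹.x = -a.x := rfl
@[simp] lemma inv_y (a : Heisenberg R) : a⁻¹.y = -a.y := rfl
@[simp] lemma inv_z (a : Heisenberg R) : a⁻¹.z = a.x * a.y - a.z := rfl

@[simp] lemma zpow_x (g : Heisenberg R) (i : ℤ) : (g ^ i).x = i * g.x := by
  induction i using Int.induction_on with
  | zero => simp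
  | succ n ih => rw [zpow_add_one, mul_x, ih]; push_cast; ring
  | pred n ih => rw [zpow_sub_one, mul_x, inv_x, ih]; push_cast; ring

@[simp] lemma zpow_y (g : Heisenberg R) (i : ℤ) : (g ^ i).y = i * g.y := by
  induction i using Int.induction_on with
  | zero => simp
  | succ n ih => rw [zpow_add_one, mul_y, ih]; push_cast; ring
  | pred n ih => rw [zpow_sub_one, mul_y, inv_y, ih]; push_cast; ring

lemma mk_zero_zero_zpow (c : R) (k : ℤ) : (⟨0, 0, c⟩ : Heisenberg R) ^ k = ⟨0, 0, k * c⟩ := by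
  induction k using Int.induction_on with
  | zero => simp [one_def]
  | succ n ih => rw [zpow_add_one, ih]; ext <;> simp; ring
  | pred n ih => rw [zpow_sub_one, ih]; ext <;> simp; ring

lemma mul_mk_zero_zero_zpow (g : Heisenberg R) (c : R) (k : ℤ) :
    g * (⟨0, 0, c⟩ : Heisenberg R) ^ k = ⟨g.x, g.y, g.z + k * c⟩ := by
  rw [mk_zero_zero_zpow]; ext <;> simp

open scoped commutatorElement in
lemma commutatorElement_eq (g h : Heisenberg R) : ⁅g, h⁆ = ⟨0, 0, g.x * h.y - h.x * g.y⟩ := by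
  rw [commutatorElement_def]; ext <;> simp; ring

section CoordinateSubgroups

variable (H : Subgroup (Heisenberg R))

def xCoords : AddSubgroup R where
  carrier := {t | ∃ g ∈ H, g.x = t}
  zero_mem' := ⟨1, H.one_mem, rfl⟩
  add_mem' := by rintro _ _ ⟨g, hg, rfl⟩ ⟨h, hh, rfl⟩; exact ⟨g * h, H.mul_mem hg hh, rfl⟩
  neg_mem' := by rintro _ ⟨g, hg, rfl⟩; exact ⟨g⁻¹, H.inv_mem hg, rfl⟩

def yCoords : AddSubgroup R where
  carrier := {t | ∃ g ∈ H, g.x = 0 ∧ g.y = t}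
  zero_mem' := ⟨1, H.one_mem, rfl, rfl⟩
  add_mem' := by
    rintro _ _ ⟨g, hg, hgx, rfl⟩ ⟨h, hh, hhx, rfl⟩
    exact ⟨g * h, H.mul_mem hg hh, by simp [hgx, hhx], rfl⟩
  neg_mem' := by rintro _ ⟨g, hg, hgx, rfl⟩; exact ⟨g⁻¹, H.inv_mem hg, by simp [hgx], rfl⟩

def zCoords : AddSubgroup R where
  carrier := {t | (⟨0, 0, t⟩ : Heisenberg R) ∈ H}
  zero_mem' := H.one_mem
  add_mem' {t t'} ht ht' := by
    have : (⟨0, 0, t + t'⟩ : Heisenberg R) = ⟨0, 0, t⟩ * ⟨0, 0, t'⟩ := by ext <;> simp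
    simpa [this] using H.mul_mem ht ht'
  neg_mem' {t} ht := by
    have : (⟨0, 0, -t⟩ : Heisenberg R) = (⟨0, 0, t⟩)⁻¹ := by ext <;> simp
    simpa [this] using H.inv_mem ht

variable {H}

lemma mem_xCoords {t : R} : t ∈ xCoords H ↔ ∃ g ∈ H, g.x = t := Iff.rfl

lemma mem_yCoords {t : R} : t ∈ yCoords H ↔ ∃ g ∈ H, g.x = 0 ∧ g.y = t := Iff.rfl

lemma mem_zCoords {t : R} : t ∈ zCoords H ↔ (⟨0, 0, t⟩ : Heisenberg R) ∈ H := Iff.rfl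

end CoordinateSubgroups

lemma exists_mul_mk_zero_zero_zpow (g : Heisenberg ℤ) {m : ℤ} (hm : 0 < m) :
    ∃ k : ℤ, ∃ z ∈ Set.Ico 0 m, g * (⟨0, 0, m⟩ : Heisenberg ℤ) ^ k = ⟨g.x, g.y, z⟩ :=
  ⟨-(g.z / m), g.z % m, ⟨Int.emod_nonneg _ hm.ne', Int.emod_lt_of_pos _ hm⟩, by
    rw [mul_mk_zero_zero_zpow, Int.emod_def, Int.cast_id]; congr 1; ring⟩

lemma exists_mul_zpow_mul_mk_zero_zero_zpow (g e : Heisenberg ℤ) (hex : e.x = 0) (hey : 0 < e.y)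
    {m : ℤ} (hm : 0 < m) : ∃ j k : ℤ, ∃ y ∈ Set.Ico 0 e.y, ∃ z ∈ Set.Ico 0 m,
      g * e ^ j * (⟨0, 0, m⟩ : Heisenberg ℤ) ^ k = ⟨g.x, y, z⟩ := by
  obtain ⟨k, z, hz, h⟩ := exists_mul_mk_zero_zero_zpow (g * e ^ (-(g.y / e.y))) hm
  refine ⟨-(g.y / e.y), k, g.y % e.y, ⟨Int.emod_nonneg _ hey.ne', Int.emod_lt_of_pos _ hey⟩,
    z, hz, ?_⟩
  rw [h]
  ext <;> simp [hex, Int.emod_def]; ring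

def InBox (a d m : ℕ) (g : Heisenberg ℤ) : Prop :=
  g.x ∈ Set.Ico 0 (a : ℤ) ∧ g.y ∈ Set.Ico 0 (d : ℤ) ∧ g.z ∈ Set.Ico 0 (m : ℤ)

lemma one_inBox {a d m : ℕ} (ha : 0 < a) (hd : 0 < d) (hm : 0 < m) : InBox a d m 1 := by
  simp [InBox, ha, hd, hm]

lemma card_inBox (a d m : ℕ) : Nat.card {g // InBox a d m g} = a * d * m := by
  let e : {g // InBox a d m g} ≃ Set.Ico (0 : ℤ) a × Set.Ico (0 : ℤ) d × Set.Ico (0 : ℤ) m :=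
    { toFun g := (⟨g.1.x, g.2.1⟩, ⟨g.1.y, g.2.2.1⟩, ⟨g.1.z, g.2.2.2⟩)
      invFun t := ⟨⟨t.1, t.2.1, t.2.2⟩, t.1.2, t.2.1.2, t.2.2.2⟩
      left_inv _ := rfl
      right_inv _ := rfl }
  rw [Nat.card_congr e, Nat.card_prod, Nat.card_prod]
  simp [mul_assoc]

structure HasInvariants (K : Subgroup (Heisenberg ℤ)) (a d m : ℕ) : Prop where
  xCoords_eq : xCoords K = AddSubgroup.zmultiples (a : ℤ)
  yCoords_eq : yCoords K = AddSubgroup.zmultiples (d : ℤ)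
  zCoords_eq : zCoords K = AddSubgroup.zmultiples (m : ℤ)

namespace HasInvariants

variable {K : Subgroup (Heisenberg ℤ)} {a d m : ℕ}

lemma dvd_x {g : Heisenberg ℤ} (hK : HasInvariants K a d m) (hg : g ∈ K) : (a : ℤ) ∣ g.x := by
  rw [← Int.mem_zmultiples_iff, ← hK.xCoords_eq]
  exact ⟨g, hg, rfl⟩

lemma dvd_y {g : Heisenberg ℤ} (hK : HasInvariants K a d m) (hg : g ∈ K) (hx : g.x = 0) :
    (d : ℤ) ∣ g.y := by
  rw [← Int.mem_zmultiples_iff, ← hK.yCoords_eq]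
  exact ⟨g, hg, hx, rfl⟩

lemma dvd_z {z : ℤ} (hK : HasInvariants K a d m) (hz : (⟨0, 0, z⟩ : Heisenberg ℤ) ∈ K) :
    (m : ℤ) ∣ z := by
  rw [← Int.mem_zmultiples_iff, ← hK.zCoords_eq]
  exact hz

lemma eq_of_inv_mul_mem {r r' : Heisenberg ℤ} (hK : HasInvariants K a d m) (hr : InBox a d m r)
    (hr' : InBox a d m r') (h : r⁻¹ * r' ∈ K) : r = r' := by
  have hx : r.x = r'.x :=
    Int.eq_of_dvd_sub_of_mem_Ico (by simpa [neg_add_eq_sub] using hK.dvd_x h) hr.1 hr'.1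
  have hy : r.y = r'.y :=
    Int.eq_of_dvd_sub_of_mem_Ico (by simpa [neg_add_eq_sub] using hK.dvd_y h (by simp [hx]))
      hr.2.1 hr'.2.1
  have hz : r.z = r'.z := by
    refine Int.eq_of_dvd_sub_of_mem_Ico (hK.dvd_z ?_) hr.2.2 hr'.2.2
    convert h using 1
    ext <;> simp [hx, hy]; ring
  ext <;> assumption

lemma unique {a' d' m' : ℕ} (hK : HasInvariants K a d m) (hK' : HasInvariants K a' d' m') :
    a = a' ∧ d = d' ∧ m = m' :=
  ⟨Int.zmultiples_natCast_injective (hK.xCoords_eq.symm.trans hK'.xCoords_eq),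
    Int.zmultiples_natCast_injective (hK.yCoords_eq.symm.trans hK'.yCoords_eq),
    Int.zmultiples_natCast_injective (hK.zCoords_eq.symm.trans hK'.zCoords_eq)⟩

end HasInvariants

@[ext]
structure TriangularBasis where
  a : ℕ
  d : ℕ
  m : ℕ
  s : ℕ
  u : ℕ
  v : ℕ

namespace TriangularBasis

variable (B : TriangularBasis)

def g₁ : Heisenberg ℤ := ⟨B.a, B.s, B.u⟩

def g₂ : Heisenberg ℤ := ⟨0, B.d, B.v⟩

def g₃ : Heisenberg ℤ := ⟨0, 0, B.m⟩

def span : Subgroup (Heisenberg ℤ) := Subgroup.closure {B.g₁, B.g₂, B.g₃}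

lemma g₁_mem_span : B.g₁ ∈ B.span := Subgroup.subset_closure (by simp)

lemma g₂_mem_span : B.g₂ ∈ B.span := Subgroup.subset_closure (by simp)

lemma g₃_mem_span : B.g₃ ∈ B.span := Subgroup.subset_closure (by simp)

structure IsReduced : Prop where
  a_pos : 0 < B.a
  d_pos : 0 < B.d
  m_dvd : B.m ∣ B.a * B.d
  s_lt : B.s < B.d
  u_lt : B.u < B.m
  v_lt : B.v < B.m

lemma IsReduced.m_pos {B : TriangularBasis} (hB : B.IsReduced) : 0 < B.m :=
  (Nat.zero_le _).trans_lt hB.u_lt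

/-- Twice the `z`-coordinate of `g₁ ^ i * g₂ ^ j`: doubling clears the denominator of
`i * (i - 1) / 2`. -/
def twiceZ (i j : ℤ) : ℤ :=
  2 * i * B.u + 2 * j * B.v + B.a * B.s * (i * (i - 1)) + 2 * i * j * B.a * B.d

variable {B}

lemma exists_of_mem_span (hm : B.m ∣ B.a * B.d) {g : Heisenberg ℤ} (hg : g ∈ B.span) :
    ∃ i j : ℤ, g.x = i * B.a ∧ g.y = i * B.s + j * B.d ∧
      2 * (B.m : ℤ) ∣ 2 * g.z - B.twiceZ i j := by
  obtain ⟨e, he⟩ : (B.m : ℤ) ∣ B.a * B.d := by exact_mod_cast hm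
  induction hg using Subgroup.closure_induction with
  | mem g hg =>
    rcases hg with rfl | rfl | rfl
    · exact ⟨1, 0, by simp [g₁], by simp [g₁], by simp [g₁, twiceZ]⟩
    · exact ⟨0, 1, by simp [g₂], by simp [g₂], by simp [g₂, twiceZ]⟩
    · exact ⟨0, 0, by simp [g₃], by simp [g₃], ⟨1, by simp [g₃, twiceZ]⟩⟩
  | one => exact ⟨0, 0, by simp, by simp, by simp [twiceZ]⟩
  | mul g h _ _ ihg ihh =>
    obtain ⟨i, j, hx, hy, hz⟩ := ihg
    obtain ⟨i', j', hx', hy', hz'⟩ := ihh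
    refine ⟨i + i', j + j', by simp [hx, hx']; ring, by simp [hy, hy']; ring, ?_⟩
    have key : 2 * (g * h).z - B.twiceZ (i + i') (j + j') =
        (2 * g.z - B.twiceZ i j) + (2 * h.z - B.twiceZ i' j') - 2 * B.m * (e * i' * j) := by
      simp only [mul_z, twiceZ, hx, hy']
      linear_combination -2 * i' * j * he
    rw [key]
    exact dvd_sub (dvd_add hz hz') (dvd_mul_right _ _)
  | inv g _ ih =>
    obtain ⟨i, j, hx, hy, hz⟩ := ih
    refine ⟨-i, -j, by simp [hx], by simp [hy]; ring, ?_⟩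
    have key : 2 * g⁻¹.z - B.twiceZ (-i) (-j) =
        -(2 * g.z - B.twiceZ i j) - 2 * B.m * (e * i * j) := by
      simp only [inv_z, twiceZ, hx, hy]
      linear_combination -2 * i * j * he
    rw [key]
    exact dvd_sub hz.neg_right (dvd_mul_right _ _)

lemma hasInvariants_span (hB : B.IsReduced) : HasInvariants B.span B.a B.d B.m := by
  have hm := hB.m_dvd
  have ha := hB.a_pos.ne'
  have hd := hB.d_pos.ne'
  refine ⟨le_antisymm ?_ ?_, le_antisymm ?_ ?_, le_antisymm ?_ ?_⟩
  · rintro _ ⟨g, hg, rfl⟩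
    obtain ⟨i, j, hx, -, -⟩ := exists_of_mem_span hm hg
    exact Int.mem_zmultiples_iff.mpr ⟨i, by rw [hx, mul_comm]⟩
  · exact AddSubgroup.zmultiples_le_of_mem ⟨B.g₁, B.g₁_mem_span, rfl⟩
  · rintro _ ⟨g, hg, hgx, rfl⟩
    obtain ⟨i, j, hx, hy, -⟩ := exists_of_mem_span hm hg
    obtain rfl : i = 0 := by simpa [ha, hgx] using hx.symm
    exact Int.mem_zmultiples_iff.mpr ⟨j, by rw [hy]; ring⟩
  · exact AddSubgroup.zmultiples_le_of_mem ⟨B.g₂, B.g₂_mem_span, rfl, rfl⟩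
  · intro t ht
    obtain ⟨i, j, hx, hy, hz⟩ := exists_of_mem_span hm ht
    obtain rfl : i = 0 := by simpa [ha] using hx.symm
    obtain rfl : j = 0 := by simpa [hd] using hy.symm
    refine Int.mem_zmultiples_iff.mpr (Int.dvd_of_mul_dvd_mul_left two_ne_zero ?_)
    simpa [twiceZ] using hz
  · exact AddSubgroup.zmultiples_le_of_mem B.g₃_mem_span

lemma exists_inBox (hB : B.IsReduced) (g : Heisenberg ℤ) :
    ∃ r, InBox B.a B.d B.m r ∧ g⁻¹ * r ∈ B.span := by
  have ha : (0 : ℤ) < B.a := by exact_mod_cast hB.a_pos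
  obtain ⟨j, k, y, hy, z, hz, h⟩ := exists_mul_zpow_mul_mk_zero_zero_zpow
    (g * B.g₁ ^ (-(g.x / B.a))) B.g₂ rfl (by simpa [g₂] using hB.d_pos) (m := B.m)
    (by exact_mod_cast hB.m_pos)
  refine ⟨⟨(g * B.g₁ ^ (-(g.x / B.a))).x, y, z⟩, ⟨?_, hy, hz⟩, ?_⟩
  · have hx : (g * B.g₁ ^ (-(g.x / B.a))).x = g.x % B.a := by
      simp [g₁, Int.emod_def]; ring
    rw [hx]
    exact ⟨Int.emod_nonneg _ ha.ne', Int.emod_lt_of_pos _ ha⟩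
  · rw [← h, mul_assoc, mul_assoc, inv_mul_cancel_left]
    exact B.span.mul_mem (B.span.zpow_mem B.g₁_mem_span _)
      (B.span.mul_mem (B.span.zpow_mem B.g₂_mem_span _) (B.span.zpow_mem B.g₃_mem_span _))

lemma index_span (hB : B.IsReduced) : B.span.index = B.a * B.d * B.m := by
  rw [Subgroup.index, ← card_inBox]
  refine (Nat.card_eq_of_bijective (fun r => (r.1 : Heisenberg ℤ ⧸ B.span)) ⟨?_, ?_⟩).symm
  · rintro ⟨r, hr⟩ ⟨r', hr'⟩ h
    exact Subtype.ext ((hasInvariants_span hB).eq_of_inv_mul_mem hr hr' (QuotientGroup.eq.mp h))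
  · intro q
    obtain ⟨g, rfl⟩ := QuotientGroup.mk_surjective q
    obtain ⟨r, hr, hg⟩ := exists_inBox hB g
    exact ⟨⟨r, hr⟩, (QuotientGroup.eq.mpr hg).symm⟩

lemma eq_of_span_eq {B' : TriangularBasis} (hB : B.IsReduced) (hB' : B'.IsReduced)
    (h : B.span = B'.span) : B = B' := by
  have hK := hasInvariants_span hB
  obtain ⟨ha, hd, hm⟩ := hK.unique (h ▸ hasInvariants_span hB')
  have h₁ : B'.g₁ * B.g₁⁻¹ ∈ B.span :=
    B.span.mul_mem (h ▸ B'.g₁_mem_span) (B.span.inv_mem B.g₁_mem_span)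
  have h₂ : B'.g₂ * B.g₂⁻¹ ∈ B.span :=
    B.span.mul_mem (h ▸ B'.g₂_mem_span) (B.span.inv_mem B.g₂_mem_span)
  -- `g₁' * g₁⁻¹ = (0, s' - s, u' - u)` and `g₂' * g₂⁻¹ = (0, 0, v' - v)` lie in the span, so the
  -- reduced points `(0, s, u)`, `(0, s', u')` (and `(0, 0, v)`, `(0, 0, v')`) of the box coincide.
  have hsu := hK.eq_of_inv_mul_mem (r := ⟨0, B.s, B.u⟩) (r' := ⟨0, B'.s, B'.u⟩)
    ⟨by simpa using hB.a_pos, by simpa using hB.s_lt, by simpa using hB.u_lt⟩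
    ⟨by simpa using hB.a_pos, by simpa [hd] using hB'.s_lt, by simpa [hm] using hB'.u_lt⟩
    (by convert h₁ using 1; ext <;> simp [g₁, ha] <;> ring)
  have hv := hK.eq_of_inv_mul_mem (r := ⟨0, 0, B.v⟩) (r' := ⟨0, 0, B'.v⟩)
    ⟨by simpa using hB.a_pos, by simpa using hB.d_pos, by simpa using hB.v_lt⟩
    ⟨by simpa using hB.a_pos, by simpa using hB.d_pos, by simpa [hm] using hB'.v_lt⟩
    (by convert h₂ using 1; ext <;> simp [g₂, hd, add_comm])
  simp only [Heisenberg.mk.injEq, Nat.cast_inj, true_and] at hsu hv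
  obtain ⟨hs, hu⟩ := hsu
  ext <;> assumption

lemma span_eq_of_le {K : Subgroup (Heisenberg ℤ)} (hB : B.IsReduced)
    (hK : HasInvariants K B.a B.d B.m) (hle : B.span ≤ K) : B.span = K := by
  refine le_antisymm hle fun g hg => ?_
  obtain ⟨r, hr, hgr⟩ := exists_inBox hB g
  have hr1 : 1 = r := hK.eq_of_inv_mul_mem (one_inBox hB.a_pos hB.d_pos hB.m_pos) hr
    (by simpa using K.mul_mem hg (hle hgr))
  rw [← hr1, mul_one] at hgr
  simpa using B.span.inv_mem hgr

end TriangularBasis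

lemma exists_hasInvariants {H : Subgroup (Heisenberg ℤ)} (hH : H.index ≠ 0) :
    ∃ a d m : ℕ, 0 < a ∧ 0 < d ∧ 0 < m ∧ HasInvariants H a d m := by
  have hpow (g : Heisenberg ℤ) : ∃ n : ℕ, 0 < n ∧ g ^ (n : ℤ) ∈ H := by
    obtain ⟨n, hn, -, hg⟩ := H.exists_pow_mem_of_index_ne_zero hH g
    exact ⟨n, hn, by rwa [zpow_natCast]⟩
  obtain ⟨n₁, hn₁, h₁⟩ := hpow ⟨1, 0, 0⟩
  obtain ⟨n₂, hn₂, h₂⟩ := hpow ⟨0, 1, 0⟩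
  obtain ⟨n₃, hn₃, h₃⟩ := hpow ⟨0, 0, 1⟩
  rw [mk_zero_zero_zpow, mul_one] at h₃
  obtain ⟨a, ha, hX⟩ := Int.exists_pos_eq_zmultiples (xCoords H) (t := n₁)
    ⟨_, h₁, by rw [zpow_x, mul_one, Int.cast_id]⟩ (by positivity)
  obtain ⟨d, hd, hY⟩ := Int.exists_pos_eq_zmultiples (yCoords H) (t := n₂)
    ⟨_, h₂, by rw [zpow_x, mul_zero], by rw [zpow_y, mul_one, Int.cast_id]⟩ (by positivity)
  obtain ⟨m, hm, hZ⟩ := Int.exists_pos_eq_zmultiples (zCoords H) h₃ (by positivity)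
  exact ⟨a, d, m, ha, hd, hm, hX, hY, hZ⟩

open scoped commutatorElement in
lemma exists_span_eq {H : Subgroup (Heisenberg ℤ)} (hH : H.index ≠ 0) :
    ∃ B : TriangularBasis, B.IsReduced ∧ B.span = H := by
  obtain ⟨a, d, m, ha, hd, hm, hK⟩ := exists_hasInvariants hH
  obtain ⟨gA, hgA, hgAx⟩ : ∃ g ∈ H, g.x = a := by
    rw [← mem_xCoords, hK.xCoords_eq]; exact AddSubgroup.mem_zmultiples _
  obtain ⟨gD, hgD, hgDx, hgDy⟩ : ∃ g ∈ H, g.x = 0 ∧ g.y = d := by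
    rw [← mem_yCoords, hK.yCoords_eq]; exact AddSubgroup.mem_zmultiples _
  have hC : (⟨0, 0, m⟩ : Heisenberg ℤ) ∈ H := by
    rw [← mem_zCoords, hK.zCoords_eq]; exact AddSubgroup.mem_zmultiples _
  have hmad : m ∣ a * d := by
    have h := H.mul_mem (H.mul_mem (H.mul_mem hgA hgD) (H.inv_mem hgA)) (H.inv_mem hgD)
    rw [← commutatorElement_def, commutatorElement_eq, hgAx, hgDx, hgDy, zero_mul, sub_zero] at h
    exact_mod_cast hK.dvd_z h
  obtain ⟨j, k, s, hs, u, hu, h₁⟩ := exists_mul_zpow_mul_mk_zero_zero_zpow gA gD hgDx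
    (by rw [hgDy]; positivity) (m := m) (by positivity)
  obtain ⟨k', v, hv, h₂⟩ := exists_mul_mk_zero_zero_zpow gD (m := m) (by positivity)
  rw [hgDy] at hs
  lift s to ℕ using hs.1
  lift u to ℕ using hu.1
  lift v to ℕ using hv.1
  let B : TriangularBasis := ⟨a, d, m, s, u, v⟩
  have hB : B.IsReduced :=
    ⟨ha, hd, hmad, by exact_mod_cast hs.2, by exact_mod_cast hu.2, by exact_mod_cast hv.2⟩
  refine ⟨B, hB, B.span_eq_of_le hB hK ?_⟩
  rw [TriangularBasis.span, Subgroup.closure_le]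
  rintro _ (rfl | rfl | rfl)
  · have : B.g₁ = gA * gD ^ j * (⟨0, 0, m⟩ : Heisenberg ℤ) ^ k := by
      rw [h₁, hgAx]; rfl
    rw [this]
    exact H.mul_mem (H.mul_mem hgA (H.zpow_mem hgD _)) (H.zpow_mem hC _)
  · have : B.g₂ = gD * (⟨0, 0, m⟩ : Heisenberg ℤ) ^ k' := by
      rw [h₂, hgDx, hgDy]; rfl
    rw [this]
    exact H.mul_mem hgD (H.zpow_mem hC _)
  · exact hC

open Finset

def indexTriples (N : ℕ) : Finset (ℕ × ℕ × ℕ) :=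
  (N.divisors ×ˢ N.divisors ×ˢ N.divisors).filter
    fun t => t.1 * t.2.1 * t.2.2 = N ∧ t.2.2 ∣ t.1 * t.2.1

lemma mem_indexTriples {N : ℕ} {t : ℕ × ℕ × ℕ} :
    t ∈ indexTriples N ↔ N ≠ 0 ∧ t.1 * t.2.1 * t.2.2 = N ∧ t.2.2 ∣ t.1 * t.2.1 := by
  simp only [indexTriples, mem_filter, mem_product, Nat.mem_divisors]
  constructor
  · rintro ⟨⟨⟨-, hN⟩, -⟩, h⟩
    exact ⟨hN, h⟩
  · rintro ⟨hN, rfl, hm⟩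
    exact ⟨⟨⟨⟨t.2.1 * t.2.2, by ring⟩, hN⟩, ⟨⟨t.1 * t.2.2, by ring⟩, hN⟩,
      ⟨⟨t.1 * t.2.1, by ring⟩, hN⟩⟩, rfl, hm⟩

lemma pos_of_mem_indexTriples {N : ℕ} {t : ℕ × ℕ × ℕ} (ht : t ∈ indexTriples N) :
    0 < t.1 ∧ 0 < t.2.1 := by
  simp only [indexTriples, mem_filter, mem_product] at ht
  exact ⟨Nat.pos_of_mem_divisors ht.1.1, Nat.pos_of_mem_divisors ht.1.2.1⟩

def reducedEquivSigma (N : ℕ) :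
    {B : TriangularBasis // B.IsReduced ∧ B.a * B.d * B.m = N} ≃
      Σ t : indexTriples N, Fin t.1.2.1 × Fin t.1.2.2 × Fin t.1.2.2 where
  toFun B := ⟨⟨(B.1.a, B.1.d, B.1.m), mem_indexTriples.mpr
      ⟨B.2.2 ▸ (Nat.mul_pos (Nat.mul_pos B.2.1.a_pos B.2.1.d_pos) B.2.1.m_pos).ne',
        B.2.2, B.2.1.m_dvd⟩⟩,
    ⟨B.1.s, B.2.1.s_lt⟩, ⟨B.1.u, B.2.1.u_lt⟩, ⟨B.1.v, B.2.1.v_lt⟩⟩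
  invFun t := ⟨⟨t.1.1.1, t.1.1.2.1, t.1.1.2.2, t.2.1, t.2.2.1, t.2.2.2⟩,
    ⟨(pos_of_mem_indexTriples t.1.2).1, (pos_of_mem_indexTriples t.1.2).2,
      (mem_indexTriples.mp t.1.2).2.2, t.2.1.2, t.2.2.1.2, t.2.2.2.2⟩,
    (mem_indexTriples.mp t.1.2).2.1⟩
  left_inv _ := rfl
  right_inv _ := rfl

theorem subgroupCount_eq_sum {N : ℕ} (hN : N ≠ 0) :
    subgroupCount (Heisenberg ℤ) N = ∑ t ∈ indexTriples N, t.2.1 * t.2.2 ^ 2 := by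
  have hcard : subgroupCount (Heisenberg ℤ) N =
      Nat.card {B : TriangularBasis // B.IsReduced ∧ B.a * B.d * B.m = N} := by
    refine (Nat.card_eq_of_bijective
      (fun B => ⟨B.1.span, (TriangularBasis.index_span B.2.1).trans B.2.2⟩) ⟨?_, ?_⟩).symm
    · rintro ⟨B, hB, _⟩ ⟨B', hB', _⟩ h
      exact Subtype.ext (TriangularBasis.eq_of_span_eq hB hB' (congrArg Subtype.val h))
    · rintro ⟨K, hK⟩
      obtain ⟨B, hB, rfl⟩ := exists_span_eq (hK ▸ hN : K.index ≠ 0)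
      exact ⟨⟨B, hB, (TriangularBasis.index_span hB).symm.trans hK⟩, rfl⟩
  rw [hcard, Nat.card_congr (reducedEquivSigma N), Nat.card_eq_fintype_card, Fintype.card_sigma,
    ← sum_coe_sort (indexTriples N)]
  simp [sq]

lemma sum_indexTriples_prime_pow {M : Type*} [AddCommMonoid M] {p : ℕ} (hp : p.Prime) (n : ℕ)
    (f : ℕ × ℕ × ℕ → M) :
    ∑ t ∈ indexTriples (p ^ n), f t =
      ∑ β ∈ range (n / 2 + 1), ∑ δ ∈ range (n - β + 1), f (p ^ (n - β - δ), p ^ δ, p ^ β) := by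
  have hinj := Nat.pow_right_injective hp.two_le
  rw [sum_sigma']
  symm
  refine sum_nbij (fun x => (p ^ (n - x.1 - x.2), p ^ x.2, p ^ x.1)) ?_ ?_ ?_ fun _ _ => rfl
  · rintro ⟨β, δ⟩ h
    simp only [mem_sigma, mem_range] at h ⊢
    refine mem_indexTriples.mpr ⟨pow_ne_zero _ hp.ne_zero, ?_, ?_⟩
    · rw [← pow_add, ← pow_add]; congr 1; omega
    · rw [← pow_add]; exact Nat.pow_dvd_pow p (by omega)
  · rintro ⟨β, δ⟩ - ⟨β', δ'⟩ - h
    simp only [Prod.mk.injEq] at h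
    obtain ⟨-, hδ, hβ⟩ := h
    rw [hinj hδ, hinj hβ]
  · rintro ⟨a, d, m⟩ ht
    obtain ⟨-, hprod, hdvd⟩ := mem_indexTriples.mp ht
    dsimp only at hprod hdvd
    have ha : a ∣ p ^ n := ⟨d * m, by rw [← hprod]; ring⟩
    have hd : d ∣ p ^ n := ⟨a * m, by rw [← hprod]; ring⟩
    have hm : m ∣ p ^ n := ⟨a * d, by rw [← hprod]; ring⟩
    obtain ⟨α, -, rfl⟩ := (Nat.dvd_prime_pow hp).mp ha
    obtain ⟨δ, -, rfl⟩ := (Nat.dvd_prime_pow hp).mp hd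
    obtain ⟨β, -, rfl⟩ := (Nat.dvd_prime_pow hp).mp hm
    have hsum : α + δ + β = n := hinj (by simpa only [pow_add] using hprod)
    have hle : β ≤ α + δ := by
      rwa [← pow_add, Nat.pow_dvd_pow_iff_le_right hp.one_lt] at hdvd
    refine ⟨⟨β, δ⟩, by simp only [coe_sigma, Set.mem_sigma_iff, coe_range, Set.mem_Iio]; omega, ?_⟩
    simp only [Prod.mk.injEq, and_true]
    congr 1
    omega

theorem subgroupCount_prime_pow {p : ℕ} (hp : p.Prime) (n : ℕ) :
    subgroupCount (Heisenberg ℤ) (p ^ n) =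
      ∑ β ∈ range (n / 2 + 1), ∑ δ ∈ range (n - β + 1), p ^ δ * (p ^ β) ^ 2 := by
  rw [subgroupCount_eq_sum (pow_ne_zero _ hp.ne_zero), sum_indexTriples_prime_pow hp]

open PowerSeries

theorem C_sub_one_mul_localZeta {p : ℕ} (hp : p.Prime) :
    (C (p : ℚ) - 1) * PowerSeries.mk (fun i => (subgroupCount (Heisenberg ℤ) (p ^ i) : ℚ)) =
      C (p : ℚ) * (geomSeries 1 (p : ℚ) * geomSeries 2 ((p : ℚ) ^ 3)) -
        geomSeries 1 1 * geomSeries 2 ((p : ℚ) ^ 2) := by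
  rw [← map_one C, ← map_sub]
  ext n
  rw [coeff_C_mul, coeff_mk, map_sub, coeff_C_mul, coeff_geomSeries_one_mul_geomSeries_two,
    coeff_geomSeries_one_mul_geomSeries_two, subgroupCount_prime_pow hp, mul_sum,
    ← sum_sub_distrib]
  push_cast
  rw [mul_sum]
  refine sum_congr rfl fun β hβ => ?_
  obtain ⟨c, rfl⟩ := Nat.exists_eq_add_of_le (show 2 * β ≤ n by simp at hβ; omega)
  rw [show 2 * β + c - β + 1 = β + c + 1 by omega, Nat.add_sub_cancel_left]
  calc ((p : ℚ) - 1) * ∑ δ ∈ range (β + c + 1), (p : ℚ) ^ δ * ((p : ℚ) ^ β) ^ 2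
      = ((p : ℚ) ^ β) ^ 2 * ((∑ δ ∈ range (β + c + 1), (p : ℚ) ^ δ) * ((p : ℚ) - 1)) := by
        rw [← sum_mul]; ring
    _ = ((p : ℚ) ^ β) ^ 2 * ((p : ℚ) ^ (β + c + 1) - 1) := by rw [geom_sum_mul]
    _ = p * ((p : ℚ) ^ c * ((p : ℚ) ^ 3) ^ β) - 1 ^ c * ((p : ℚ) ^ 2) ^ β := by ring

end Heisenberg

open PowerSeries in
/-- **The local subgroup zeta function of the integral Heisenberg group** (Grunewald–Segal–Smith):
for every prime `p`,
`(∑_{i≥0} a_{p^i}(H(ℤ)) Y^i) (1-Y)(1-pY)(1-p²Y²)(1-p³Y²) = 1 - p³Y³`,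
i.e. `ζ_{H(ℤ)}(s) = ζ(s)ζ(s-1)ζ(2s-2)ζ(2s-3)ζ(3s-3)⁻¹` factor by factor at each prime. -/
theorem local_subgroup_zeta_heisenberg (p : ℕ) (hp : p.Prime) :
    (PowerSeries.mk fun i => (subgroupCount (Heisenberg ℤ) (p ^ i) : ℚ)) *
        ((1 - X) * (1 - (p : PowerSeries ℚ) * X) * (1 - (p : PowerSeries ℚ) ^ 2 * X ^ 2) *
          (1 - (p : PowerSeries ℚ) ^ 3 * X ^ 2))
      = 1 - (p : PowerSeries ℚ) ^ 3 * X ^ 3 := by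
  have hC : (C (p : ℚ) - 1 : ℚ⟦X⟧) ≠ 0 := by
    rw [sub_ne_zero, ← map_one C, C_injective.ne_iff, Ne, Nat.cast_eq_one]
    exact hp.ne_one
  rw [← map_natCast C p]
  apply mul_left_cancel₀ hC
  have hA := geomSeries_one_mul_geomSeries_two_mul (p : ℚ) ((p : ℚ) ^ 3)
  have hB := geomSeries_one_mul_geomSeries_two_mul (1 : ℚ) ((p : ℚ) ^ 2)
  simp only [map_one, one_mul, map_pow] at hA hB
  linear_combination (1 - X) * (1 - C (p : ℚ) * X) * (1 - C (p : ℚ) ^ 2 * X ^ 2) *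
      (1 - C (p : ℚ) ^ 3 * X ^ 2) * Heisenberg.C_sub_one_mul_localZeta hp
    + C (p : ℚ) * (1 - X) * (1 - C (p : ℚ) ^ 2 * X ^ 2) * hA
    - (1 - C (p : ℚ) * X) * (1 - C (p : ℚ) ^ 3 * X ^ 2) * hB
end

section
/- Let n ≥ 2 be an integer and set r = n − 1. For a tuple a = (a₁,…,a_r) ∈ ℕ₀^r, define the Weyl dimension D(a) = ∏_{1 ≤ i ≤ j ≤ r} ( (a_i + a_{i+1} + ⋯ + a_j + (j − i + 1)) / (j − i + 1) ), a positive rational number. Then for every real s > 0, the family (D(a)^{−s})_{a ∈ ℕ₀^r} of positive real numbers is summable if and only if s > 2/n. (This is the statement that the abscissa of convergence of the Witten zeta function ζ^{irr}_{SL_n(ℂ)}(s) = ∑_a D(a)^{−s} equals r/κ with κ = n(n−1)/2 the number of positive roots of the root system A_{n−1}.) -/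
/-!
The factor of `D a` at the root `α_i + ⋯ + α_j` is the average of `a_k + 1` over `i ≤ k ≤ j`.
Bounding it below by `(a_i + 1) / r` and by `(a_j + 1) / r`, and using that every index occurs
in exactly `r + 1` of the pairs `i ≤ j`, gives `D a ^ (-s) ≪ ∏ k, (a_k + 1) ^ (-s n / 2)`, a
product of convergent one-variable series when `s n > 2`. Conversely, on the box `[m, 2m)^r`
every factor is at most `2m`, so the box contributes at least `m^r (2m)^(-κ s) ≥ 2^(-κ s)`
when `κ s ≤ r`, i.e. `s n ≤ 2`; since these boxes eventually avoid any finite set, the series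
is not Cauchy.
-/

open Finset

namespace WittenZeta

variable {r : ℕ}

lemma summable_prod_pi_of_nonneg {α : Type*} {f : α → ℝ} (hf0 : 0 ≤ f) (hf : Summable f) :
    ∀ m : ℕ, Summable fun a : Fin m → α => ∏ i, f (a i)
  | 0 => .of_finite
  | m + 1 => by
    rw [← (Fin.consEquiv fun _ => α).summable_iff]
    refine (hf.mul_of_nonneg (summable_prod_pi_of_nonneg hf0 hf m) hf0
      fun a => prod_nonneg fun i _ => hf0 (a i)).congr fun p => ?_
    simp [Fin.prod_univ_succ]

lemma summable_pow_add_one_rpow_neg {c : ℝ} (n : ℕ) (hc : 1 < c * n) :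
    Summable fun t : ℕ => (((t : ℝ) + 1) ^ (-c)) ^ n := by
  have h : Summable fun t : ℕ => (t : ℝ) ^ (-c * n) := Real.summable_nat_rpow.2 (by linarith)
  refine ((summable_nat_add_iff 1).2 h).congr fun t => ?_
  rw [Nat.cast_add_one, Real.rpow_mul_natCast (by positivity)]

lemma not_summable_of_le_pow_mul_on_boxes (hr : 0 < r) {f : (Fin r → ℕ) → ℝ} {c : ℝ}
    (hc : 0 < c)
    (hf : ∀ m : ℕ, 0 < m → ∀ a : Fin r → ℕ, (∀ k, a k ∈ Ico m (2 * m)) → c ≤ (m : ℝ) ^ r * f a) :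
    ¬ Summable f := by
  intro hsum
  obtain ⟨S, hS⟩ := hsum.vanishing (Iio_mem_nhds hc)
  set m := S.sup (· ⟨0, hr⟩) + 1
  set box := Fintype.piFinset fun _ : Fin r => Ico m (2 * m)
  have hdisj : Disjoint box S := disjoint_left.2 fun a ha haS => by
    have h₁ := (mem_Ico.1 (Fintype.mem_piFinset.1 ha ⟨0, hr⟩)).1
    have h₂ := le_sup (f := (· ⟨0, hr⟩)) haS
    omega
  have hcard : (#box : ℝ) = (m : ℝ) ^ r := by
    rw [Fintype.card_piFinset, prod_const, Nat.card_Ico, card_univ, Fintype.card_fin, two_mul,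
      Nat.add_sub_cancel, Nat.cast_pow]
  have hmr : (0 : ℝ) < (m : ℝ) ^ r := by positivity
  have hbox : c ≤ ∑ a ∈ box, f a := calc
    c = #box • (c / (m : ℝ) ^ r) := by rw [nsmul_eq_mul, hcard]; field_simp
    _ ≤ ∑ a ∈ box, f a := card_nsmul_le_sum _ _ _ fun a ha => by
        rw [div_le_iff₀ hmr, mul_comm]
        exact hf m (Nat.succ_pos _) a (Fintype.mem_piFinset.1 ha)
  exact (hS box hdisj).not_ge hbox

/-- The positive root `α_i + ⋯ + α_j` of `A_r` is encoded as the pair `(i, j)` with `i ≤ j`. -/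
def posRoots (r : ℕ) : Finset (Fin r × Fin r) := {p | p.1 ≤ p.2}

lemma prod_ite_le_eq_prod_posRoots {M : Type*} [CommMonoid M] (f : Fin r → Fin r → M) :
    ∏ i, ∏ j, (if i ≤ j then f i j else 1) = ∏ p ∈ posRoots r, f p.1 p.2 := by
  rw [posRoots, prod_filter, ← univ_product_univ, prod_product]

@[to_additive]
lemma prod_posRoots_fst {M : Type*} [CommMonoid M] (x : Fin r → M) :
    ∏ p ∈ posRoots r, x p.1 = ∏ i, x i ^ (r - (i : ℕ)) := by
  rw [prod_finset_product (posRoots r) univ Ici (by simp [posRoots])]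
  simp [Fin.card_Ici]

@[to_additive]
lemma prod_posRoots_snd {M : Type*} [CommMonoid M] (x : Fin r → M) :
    ∏ p ∈ posRoots r, x p.2 = ∏ j, x j ^ ((j : ℕ) + 1) := by
  rw [prod_finset_product_right (posRoots r) univ Iic (by simp [posRoots])]
  simp [Fin.card_Iic]

@[to_additive]
lemma prod_posRoots_mul {M : Type*} [CommMonoid M] (x : Fin r → M) :
    ∏ p ∈ posRoots r, x p.1 * x p.2 = ∏ k, x k ^ (r + 1) := by
  rw [prod_mul_distrib, prod_posRoots_fst, prod_posRoots_snd, ← prod_mul_distrib]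
  refine prod_congr rfl fun k _ => ?_
  rw [← pow_add]
  congr 1
  omega

lemma two_mul_card_posRoots : 2 * #(posRoots r) = r * (r + 1) := by
  have h := sum_posRoots_add fun _ : Fin r => 1
  simp only [sum_const, smul_eq_mul, card_univ, Fintype.card_fin, mul_one] at h
  linarith

section WeylFactor

variable (a : Fin r → ℕ) {i j : Fin r}

noncomputable def weylFactor (i j : Fin r) : ℝ :=
  ((∑ k ∈ Icc i j, (a k : ℝ)) + ((j : ℕ) - (i : ℕ) + 1)) / ((j : ℕ) - (i : ℕ) + 1)

noncomputable def weylDim : ℝ := ∏ p ∈ posRoots r, weylFactor a p.1 p.2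

lemma weylFactor_eq_average (h : i ≤ j) :
    weylFactor a i j = (∑ k ∈ Icc i j, ((a k : ℝ) + 1)) / #(Icc i j) := by
  have hcard : (#(Icc i j) : ℝ) = (j : ℕ) - (i : ℕ) + 1 := by
    rw [Fin.card_Icc, Nat.cast_sub (by have := Fin.le_def.1 h; omega)]
    push_cast
    ring
  rw [weylFactor, sum_add_distrib, sum_const, nsmul_one, hcard]

lemma weylFactor_pos (h : i ≤ j) : 0 < weylFactor a i j := by
  rw [weylFactor_eq_average a h]
  have : (Icc i j).Nonempty := nonempty_Icc.2 h
  positivity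

lemma add_one_le_mul_weylFactor {k : Fin r} (hik : i ≤ k) (hkj : k ≤ j) :
    (a k : ℝ) + 1 ≤ r * weylFactor a i j := by
  have hL : (0 : ℝ) < #(Icc i j) := by
    exact_mod_cast (nonempty_Icc.2 (hik.trans hkj)).card_pos
  have hLr : (#(Icc i j) : ℝ) ≤ r := by
    exact_mod_cast (card_le_univ _).trans_eq (Fintype.card_fin r)
  have hS : (a k : ℝ) + 1 ≤ ∑ l ∈ Icc i j, ((a l : ℝ) + 1) :=
    single_le_sum (f := fun l => (a l : ℝ) + 1) (fun _ _ => by positivity)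
      (mem_Icc.2 ⟨hik, hkj⟩)
  rw [weylFactor_eq_average a (hik.trans hkj)]
  calc (a k : ℝ) + 1 ≤ ∑ l ∈ Icc i j, ((a l : ℝ) + 1) := hS
    _ = #(Icc i j) * ((∑ l ∈ Icc i j, ((a l : ℝ) + 1)) / #(Icc i j)) := by field_simp
    _ ≤ r * ((∑ l ∈ Icc i j, ((a l : ℝ) + 1)) / #(Icc i j)) := by gcongr

lemma weylFactor_le {m : ℝ} (ha : ∀ k, (a k : ℝ) + 1 ≤ m) (h : i ≤ j) :
    weylFactor a i j ≤ m := by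
  have hL : (0 : ℝ) < #(Icc i j) := by exact_mod_cast (nonempty_Icc.2 h).card_pos
  rw [weylFactor_eq_average a h, div_le_iff₀ hL, mul_comm, ← nsmul_eq_mul]
  exact sum_le_card_nsmul _ _ _ fun k _ => ha k

/-- Splits `F ^ (-s) = F ^ (-s/2) * F ^ (-s/2)` and bounds the two halves using
`(a i + 1) / r ≤ F` and `(a j + 1) / r ≤ F`. -/
lemma weylFactor_rpow_neg_le {s : ℝ} (hs : 0 ≤ s) (h : i ≤ j) :
    weylFactor a i j ^ (-s) ≤
      (r : ℝ) ^ s * (((a i : ℝ) + 1) ^ (-(s / 2)) * ((a j : ℝ) + 1) ^ (-(s / 2))) := by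
  have hF := weylFactor_pos a h
  have hr : (0 : ℝ) < r := by exact_mod_cast i.pos
  have bound : ∀ k, i ≤ k → k ≤ j →
      weylFactor a i j ^ (-(s / 2)) ≤ (r : ℝ) ^ (s / 2) * ((a k : ℝ) + 1) ^ (-(s / 2)) := by
    intro k hik hkj
    have hk : ((a k : ℝ) + 1) / r ≤ weylFactor a i j := by
      rw [div_le_iff₀ hr, mul_comm]; exact add_one_le_mul_weylFactor a hik hkj
    calc weylFactor a i j ^ (-(s / 2)) ≤ (((a k : ℝ) + 1) / r) ^ (-(s / 2)) :=
          Real.rpow_le_rpow_of_nonpos (by positivity) hk (by linarith)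
      _ = (r : ℝ) ^ (s / 2) * ((a k : ℝ) + 1) ^ (-(s / 2)) := by
          rw [Real.div_rpow (by positivity) hr.le, Real.rpow_neg hr.le, div_inv_eq_mul,
            mul_comm]
  calc weylFactor a i j ^ (-s)
      = weylFactor a i j ^ (-(s / 2)) * weylFactor a i j ^ (-(s / 2)) := by
        rw [← Real.rpow_add hF]; ring_nf
    _ ≤ ((r : ℝ) ^ (s / 2) * ((a i : ℝ) + 1) ^ (-(s / 2))) *
          ((r : ℝ) ^ (s / 2) * ((a j : ℝ) + 1) ^ (-(s / 2))) :=
        mul_le_mul (bound i le_rfl h) (bound j h le_rfl) (by positivity) (by positivity)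
    _ = (r : ℝ) ^ s * (((a i : ℝ) + 1) ^ (-(s / 2)) * ((a j : ℝ) + 1) ^ (-(s / 2))) := by
        rw [← add_halves s, Real.rpow_add hr, add_halves]; ring

lemma weylDim_le {m : ℝ} (ha : ∀ k, (a k : ℝ) + 1 ≤ m) : weylDim a ≤ m ^ #(posRoots r) := by
  rw [weylDim, ← prod_const]
  refine prod_le_prod (fun p hp => (weylFactor_pos a (mem_filter.1 hp).2).le) fun p hp => ?_
  exact weylFactor_le a ha (mem_filter.1 hp).2

lemma weylDim_rpow_neg_le {s : ℝ} (hs : 0 ≤ s) :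
    weylDim a ^ (-s) ≤
      ((r : ℝ) ^ s) ^ #(posRoots r) * ∏ k, (((a k : ℝ) + 1) ^ (-(s / 2))) ^ (r + 1) := by
  have hpos : ∀ p ∈ posRoots r, 0 < weylFactor a p.1 p.2 :=
    fun p hp => weylFactor_pos a (mem_filter.1 hp).2
  rw [weylDim, ← Real.finsetProd_rpow _ _ fun p hp => (hpos p hp).le, ← prod_posRoots_mul,
    ← prod_const, ← prod_mul_distrib]
  exact prod_le_prod (fun p hp => Real.rpow_nonneg (hpos p hp).le _)
    fun p hp => weylFactor_rpow_neg_le a hs (mem_filter.1 hp).2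

lemma weylDim_pos : 0 < weylDim a :=
  prod_pos fun _ hp => weylFactor_pos a (mem_filter.1 hp).2

end WeylFactor

theorem summable_weylDim_rpow_neg {s : ℝ} (hs : 2 < s * (r + 1)) :
    Summable fun a : Fin r → ℕ => weylDim a ^ (-s) := by
  have hs0 : 0 ≤ s := by
    by_contra! h
    nlinarith [(r.cast_nonneg : (0 : ℝ) ≤ r)]
  have hprod := summable_prod_pi_of_nonneg (fun _ => by positivity)
    (summable_pow_add_one_rpow_neg (c := s / 2) (r + 1) (by push_cast; linarith)) r
  exact .of_nonneg_of_le (fun a => (Real.rpow_pos_of_pos (weylDim_pos a) _).le)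
    (weylDim_rpow_neg_le · hs0) (hprod.mul_left _)

theorem not_summable_weylDim_rpow_neg (hr : 0 < r) {s : ℝ} (hs0 : 0 ≤ s)
    (hs : s * (r + 1) ≤ 2) : ¬ Summable fun a : Fin r → ℕ => weylDim a ^ (-s) := by
  set K := #(posRoots r)
  have hK : s * K ≤ r := by
    have h : 2 * (K : ℝ) = r * (r + 1) := by exact_mod_cast two_mul_card_posRoots
    nlinarith [(r.cast_nonneg : (0 : ℝ) ≤ r)]
  refine not_summable_of_le_pow_mul_on_boxes hr (c := ((2 : ℝ) ^ K) ^ (-s)) (by positivity)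
    fun m hm a ha => ?_
  have hm1 : (1 : ℝ) ≤ m := by exact_mod_cast hm
  have hD : weylDim a ≤ (2 * m : ℝ) ^ K :=
    weylDim_le a fun k => by exact_mod_cast (mem_Ico.1 (ha k)).2
  have hmK : ((m : ℝ) ^ K) ^ s ≤ (m : ℝ) ^ r := by
    rw [← Real.rpow_natCast_mul (by positivity), ← Real.rpow_natCast (m : ℝ) r]
    exact Real.rpow_le_rpow_of_exponent_le hm1 (by linarith)
  calc ((2 : ℝ) ^ K) ^ (-s) = ((m : ℝ) ^ K) ^ s * ((2 * m : ℝ) ^ K) ^ (-s) := by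
        rw [mul_pow, Real.mul_rpow (by positivity) (by positivity), Real.rpow_neg (by positivity),
          Real.rpow_neg (by positivity)]
        field_simp
    _ ≤ (m : ℝ) ^ r * weylDim a ^ (-s) :=
        mul_le_mul hmK (Real.rpow_le_rpow_of_nonpos (weylDim_pos a) hD (by linarith))
          (by positivity) (by positivity)

end WittenZeta

/-- **The abscissa of convergence of the Witten zeta function of `SL_n(ℂ)`**
(Larsen–Lubotzky). Let `n ≥ 2`, `r = n - 1`, and for `a ∈ ℕ₀^r` let `D a` be the Weyl
dimension `∏_{1 ≤ i ≤ j ≤ r} ((a_i + ⋯ + a_j + (j-i+1))/(j-i+1))`. For every real `s > 0`,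
the family `(D a)^{-s}` is summable if and only if `s > 2/n`; that is, the abscissa of
convergence of `ζ^{irr}_{SL_n(ℂ)}(s) = ∑_a (D a)^{-s}` equals `r/κ` with
`κ = n(n-1)/2` the number of positive roots of `A_{n-1}`. -/
theorem witten_zeta_abscissa_SLn (n : ℕ) (hn : 2 ≤ n) (r : ℕ) (hr : r = n - 1)
    (D : (Fin r → ℕ) → ℝ)
    (hD : ∀ a : Fin r → ℕ,
      D a = ∏ i : Fin r, ∏ j : Fin r,
        if i ≤ j then
          ((∑ k ∈ Finset.Icc i j, (a k : ℝ)) + ((j : ℕ) - (i : ℕ) + 1)) /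
            ((j : ℕ) - (i : ℕ) + 1)
        else 1)
    (s : ℝ) (hs : 0 < s) :
    Summable (fun a : Fin r → ℕ => (D a) ^ (-s)) ↔ 2 / (n : ℝ) < s := by
  obtain rfl : n = r + 1 := by omega
  have hDweyl : D = WittenZeta.weylDim :=
    funext fun a => (hD a).trans (WittenZeta.prod_ite_le_eq_prod_posRoots _)
  rw [hDweyl, div_lt_iff₀ (by positivity)]
  push_cast
  by_cases hlt : 2 < s * (r + 1)
  · exact iff_of_true (WittenZeta.summable_weylDim_rpow_neg hlt) hlt
  · exact iff_of_false
      (WittenZeta.not_summable_weylDim_rpow_neg (by omega) hs.le (not_lt.1 hlt)) hlt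
end
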